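/- Let n ≥ 0 and let P be a homogeneous polynomial of degree n+2 in the n+1 real variables y₀,…,y_n. Suppose that P, together with all of its iterated partial derivatives of order ≤ n, vanishes at every standard coordinate basis point e₀,…,e_n of ℝ^{n+1} (where e_i has i-th coordinate 1 and all others 0). Then P is identically zero. -/

import Mathlib

/-!
By pigeonhole, every monomial `y^d` of degree `n + 2` in `n + 1` variables has some exponent
`d i ≥ 2`. Differentiating along the exponents of the other variables is a derivative of order
`n + 2 - d i ≤ n`, and evaluating it at `e i` kills every other monomial of `P` (by homogeneity),
leaving a nonzero multiple of the coefficient of `y^d`.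
-/

open MvPolynomial Finsupp

namespace Multiset

variable {α : Type*} [DecidableEq α]

theorem toFinsupp_cons (a : α) (s : Multiset α) :
    toFinsupp (a ::ₘ s) = toFinsupp s + Finsupp.single a 1 := by
  rw [← singleton_add, toFinsupp_add, toFinsupp_singleton, add_comm]

theorem degree_toFinsupp (s : Multiset α) : (toFinsupp s).degree = card s :=
  toFinsupp_sum_eq s

end Multiset

namespace MvPolynomial

variable {R ι : Type*} [CommSemiring R]

noncomputable def iteratedPDeriv (L : List ι) (P : MvPolynomial ι R) : MvPolynomial ι R :=
  L.foldr (fun v Q => pderiv v Q) P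

theorem iteratedPDeriv_sum {σ : Type*} (L : List ι) (s : Finset σ) (f : σ → MvPolynomial ι R) :
    iteratedPDeriv L (∑ x ∈ s, f x) = ∑ x ∈ s, iteratedPDeriv L (f x) := by
  induction L with
  | nil => rfl
  | cons v L ih => simp only [iteratedPDeriv, List.foldr_cons] at ih ⊢; rw [ih, map_sum]

theorem prod_descFactorial_count_cons [Fintype ι] [DecidableEq ι] (u : ι → ℕ) (v : ι)
    (L : List ι) :
    ∏ j, (u j).descFactorial ((v :: L).count j) =
      (∏ j, (u j).descFactorial (L.count j)) * (u v - L.count v) := by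
  have hfactor : ∀ j, (u j).descFactorial ((v :: L).count j) =
      (u j).descFactorial (L.count j) * if j = v then u v - L.count v else 1 := by
    intro j
    by_cases hj : j = v
    · subst hj; simp [List.count_cons_self, Nat.descFactorial_succ, mul_comm]
    · simp [List.count_cons_of_ne (Ne.symm hj), hj]
  simp_rw [hfactor, Finset.prod_mul_distrib, Finset.prod_ite_eq', Finset.mem_univ, if_true]

theorem prod_descFactorial_count_ne_zero_iff [Fintype ι] [DecidableEq ι] (u : ι →₀ ℕ)
    (L : List ι) :
    ∏ j, (u j).descFactorial (L.count j) ≠ 0 ↔ Multiset.toFinsupp ↑L ≤ u := by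
  simp [Finset.prod_ne_zero_iff, Nat.descFactorial_eq_zero_iff_lt, Finsupp.le_def]

theorem iteratedPDeriv_monomial [Fintype ι] [DecidableEq ι] (L : List ι) (u : ι →₀ ℕ) (c : R) :
    iteratedPDeriv L (monomial u c) =
      monomial (u - Multiset.toFinsupp ↑L) (c * ↑(∏ j, (u j).descFactorial (L.count j))) := by
  induction L with
  | nil => simp [iteratedPDeriv]
  | cons v L ih =>
    simp only [iteratedPDeriv, List.foldr_cons] at ih ⊢
    rw [ih, pderiv_monomial, ← Multiset.cons_coe, Multiset.toFinsupp_cons, tsub_add_eq_tsub_tsub,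
      prod_descFactorial_count_cons, Nat.cast_mul, mul_assoc, Finsupp.tsub_apply,
      Multiset.toFinsupp_apply, Multiset.coe_count]

theorem eval_piSingle_monomial [DecidableEq ι] (i : ι) (w : ι →₀ ℕ) (c : R) :
    eval (Pi.single i 1) (monomial w c) = if w = single i (w i) then c else 0 := by
  rw [eval_monomial]
  split_ifs with hw
  · rw [hw, prod_single_index] <;> simp
  · obtain ⟨j, hji, hj⟩ : ∃ j ≠ i, w j ≠ 0 := by
      by_contra! h
      exact hw (Finsupp.ext fun j => by
        by_cases hj : j = i
        · simp [hj]
        · simp [h j hj, Ne.symm hj])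
    rw [Finsupp.prod, Finset.prod_eq_zero (Finsupp.mem_support_iff.mpr hj)
      (by rw [Pi.single_eq_of_ne hji, zero_pow hj]), mul_zero]

theorem eval_piSingle_iteratedPDeriv [Fintype ι] [DecidableEq ι] {m k : ℕ}
    {P : MvPolynomial ι R} (hP : P.IsHomogeneous m) {L : List ι} {i : ι} {d : ι →₀ ℕ}
    (hd : Multiset.toFinsupp ↑L + single i k = d) (hk : L.length + k = m) :
    eval (Pi.single i 1) (iteratedPDeriv L P) =
      coeff d P * ↑(∏ j, (d j).descFactorial (L.count j)) := by
  set ν := Multiset.toFinsupp (↑L : Multiset ι)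
  conv_lhs => rw [P.as_sum]
  simp_rw [iteratedPDeriv_sum, map_sum, iteratedPDeriv_monomial, eval_piSingle_monomial]
  refine (Finset.sum_eq_single d (fun u hu hud => ?_) (fun hd_mem => ?_)).trans ?_
  · split_ifs with hsingle
    · obtain hprod | hprod := eq_or_ne (∏ j, (u j).descFactorial (L.count j)) 0
      · rw [hprod, Nat.cast_zero, mul_zero]
      refine absurd ?_ hud
      have hu_eq : ν + single i ((u - ν) i) = u := by
        rw [← hsingle, add_tsub_cancel_of_le ((prod_descFactorial_count_ne_zero_iff u L).mp hprod)]
      have hdeg : u.degree = m := (hP.degree_eq_sum_deg_support hu).symm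
      rw [← hu_eq, map_add, degree_single, Multiset.degree_toFinsupp, Multiset.coe_card] at hdeg
      rw [← hu_eq, ← hd, show (u - ν) i = k by omega]
    · rfl
  · simp [notMem_support_iff.mp hd_mem]
  · subst hd
    rw [add_tsub_cancel_left, if_pos (by simp)]

end MvPolynomial

theorem stmt_8 (n : ℕ) (P : MvPolynomial (Fin (n + 1)) ℝ)
    (hP : P.IsHomogeneous (n + 2))
    (hvan : ∀ L : List (Fin (n + 1)), L.length ≤ n →
      ∀ i : Fin (n + 1),
        MvPolynomial.eval (fun j => if j = i then (1 : ℝ) else 0)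
          (L.foldr (fun v Q => MvPolynomial.pderiv v Q) P) = 0) :
    P = 0 := by
  ext d
  rw [coeff_zero]
  by_contra hd
  have hdeg : d.degree = n + 2 :=
    (hP.degree_eq_sum_deg_support (MvPolynomial.mem_support_iff.mpr hd)).symm
  obtain ⟨i, -, hi⟩ : ∃ i ∈ Finset.univ, 1 < d i := Finset.exists_lt_of_sum_lt (by
    simp [← degree_eq_sum, hdeg])
  set L := (d.erase i).toMultiset.toList
  have hL : Multiset.toFinsupp ↑L = d.erase i := by
    rw [Multiset.coe_toList, Finsupp.toMultiset_toFinsupp]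
  have hlen : L.length + d i = n + 2 := by
    have := congrArg degree (erase_add_single i d)
    rwa [map_add, degree_single, ← hL, Multiset.degree_toFinsupp, Multiset.coe_card, hdeg] at this
  have hprod : ∏ j, (d j).descFactorial (L.count j) ≠ 0 :=
    (prod_descFactorial_count_ne_zero_iff d L).mpr (hL ▸ fun j => by
      by_cases hj : j = i <;> simp [hj, erase_ne])
  have hEval := hvan L (by omega) i
  rw [show (fun j => if j = i then (1 : ℝ) else 0) = Pi.single i 1 from
    funext fun j => (Pi.single_apply i 1 j).symm] at hEval
  rw [← iteratedPDeriv, eval_piSingle_iteratedPDeriv hP (by rw [hL, erase_add_single]) hlen]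
    at hEval
  exact mul_ne_zero hd (Nat.cast_ne_zero.mpr hprod) hEval
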